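/- Let p ≥ 1, let ρ_1,…,ρ_M ∈ P_p(ℝ^d), let α > 0, and let the cost functions E_1,…,E_M satisfy Assumption (A2) with constants ℓ, c, G. Then there exists a constant C > 0 depending only on p, ℓ, c, G and M such that for all m ∈ [M], |X_α^m(ρ_m, M̄^{−m})| ≤ [∫_{ℝ^d} |x| e^{−α E_m(x; M̄^{−m})} dρ_m(x)] / [∫_{ℝ^d} e^{−α E_m(x; M̄^{−m})} dρ_m(x)] ≤ C ( Σ_{j=1}^M ∫_{ℝ^d} |x|^p dρ_j(x) )^{1/p}, where M̄ := (E[ρ_1],…,E[ρ_M]) and M̄^{−m} omits the m-th component. -/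

import Mathlib

/-!
Write `w = exp (-α E_m(·; Y))` for the Gibbs weight and `S` for the `p`-th root of the summed
`p`-th moments, so that `∫ |x| dρ_j ≤ S` by Lyapunov's inequality and `|Y| ≤ √M S`.
The first inequality is the triangle inequality for the Bochner integral. For the second,
Markov's inequality puts half of the mass of `ρ_m` in the ball `|x| < 2S`, where
`|(x, Y)| ≤ (2 + √M) S` and (A2) bounds `w` from below, so `∫ w` is at least half that bound.
Splitting at a radius `R` gives `∫ |x| w ≤ R ∫ w + (sup_{|x| > R} w) S`. For `S ≤ 1` (or `ℓ = 0`)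
take `R = 0` and use that `w ≤ exp (α G / c)`; for `S > 1` and `ℓ > 0` take `R = λ S` with `λ` so
large that, by (A2), `w` on `|x| > R` is below its lower bound on the ball.
-/

open MeasureTheory Finset
open scoped ENNReal NNReal

noncomputable section

/-- `ℝ^d` with the Euclidean norm. -/
abbrev Vec (d : ℕ) := EuclideanSpace ℝ (Fin d)

/-- `ℝ^{M·d}`, the space of opponents' strategies, with the Euclidean norm. -/
abbrev Opp (M d : ℕ) := EuclideanSpace ℝ (Fin M × Fin d)

/-- Euclidean norm of the concatenated vector `(x, y) ∈ ℝ^d × ℝ^{M·d}`. -/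
def pairNorm {d M : ℕ} (x : Vec d) (y : Opp M d) : ℝ :=
  Real.sqrt (‖x‖ ^ 2 + ‖y‖ ^ 2)

/-- Given strategies `Z^1, …, Z^{M+1}`, the vector `Z^{-m}` of all strategies except the
`m`-th one. -/
def oppOf {M d : ℕ} (m : Fin (M + 1)) (Z : Fin (M + 1) → Vec d) : Opp M d :=
  WithLp.toLp 2 fun p : Fin M × Fin d => Z (m.succAbove p.1) p.2

/-- The consensus point `X_α(ρ, Y) = (∫ x e^{-α E(x;Y)} dρ)/(∫ e^{-α E(x;Y)} dρ)`. -/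
def consensus {d M : ℕ} (α : ℝ) (Em : Vec d → Opp M d → ℝ)
    (ρ : Measure (Vec d)) (Y : Opp M d) : Vec d :=
  (∫ x, Real.exp (-α * Em x Y) ∂ρ)⁻¹ • ∫ x, Real.exp (-α * Em x Y) • x ∂ρ

/-- The mean `E[μ] = ∫ x dμ(x)` of a measure on `ℝ^d`. -/
def meanOf {d : ℕ} (μ : Measure (Vec d)) : Vec d := ∫ x, x ∂μ

/-- The empirical measure `(1/N) ∑_{i} δ_{X_i}`. -/
def empMeas {d N : ℕ} (X : Fin N → Vec d) : Measure (Vec d) :=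
  (N : ℝ≥0∞)⁻¹ • ∑ i, Measure.dirac (X i)

/-- The `p`-Wasserstein distance, as an infimum over couplings. -/
def Wdist {d : ℕ} (p : ℝ) (μ ν : Measure (Vec d)) : ℝ :=
  (sInf { e : ℝ≥0∞ | ∃ π : Measure (Vec d × Vec d), IsProbabilityMeasure π ∧
      π.map Prod.fst = μ ∧ π.map Prod.snd = ν ∧
      e = (∫⁻ z, (‖z.1 - z.2‖₊ : ℝ≥0∞) ^ p ∂π) ^ (1 / p) }).toReal

/-- Euclidean norm of a configuration `X = (X^{m,i}) ∈ ℝ^{(M+1)·N·d}`. -/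
def confNorm {d M N : ℕ} (X : Fin (M + 1) → Fin N → Vec d) : ℝ :=
  Real.sqrt (∑ m, ∑ i, ‖X m i‖ ^ 2)

theorem memLp_ofReal_of_lintegral_lt_top {α E : Type*} [MeasurableSpace α]
    [NormedAddCommGroup E] {μ : Measure α} {f : α → E} {p : ℝ} (hp : 0 < p)
    (hf : AEStronglyMeasurable f μ) (h : ∫⁻ x, (‖f x‖₊ : ℝ≥0∞) ^ p ∂μ < ⊤) :
    MemLp f (ENNReal.ofReal p) μ :=
  ⟨hf, (eLpNorm_lt_top_iff_lintegral_rpow_enorm_lt_top (by simpa) ENNReal.ofReal_ne_top).2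
    (by simpa [ENNReal.toReal_ofReal hp.le, enorm_eq_nnnorm] using h)⟩

theorem integral_norm_le_integral_norm_rpow {α E : Type*} [MeasurableSpace α]
    [NormedAddCommGroup E] {μ : Measure α} [IsProbabilityMeasure μ] {f : α → E} {p : ℝ}
    (hp : 1 ≤ p) (hf : MemLp f (ENNReal.ofReal p) μ) :
    ∫ x, ‖f x‖ ∂μ ≤ (∫ x, ‖f x‖ ^ p ∂μ) ^ (1 / p) := by
  have hp₁ : 1 ≤ ENNReal.ofReal p := by simpa using ENNReal.ofReal_le_ofReal hp
  have h := eLpNorm_le_eLpNorm_of_exponent_le hp₁ hf.1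
  rw [(hf.mono_exponent hp₁).eLpNorm_eq_integral_rpow_norm one_ne_zero ENNReal.one_ne_top,
    hf.eLpNorm_eq_integral_rpow_norm (by simp; linarith) ENNReal.ofReal_ne_top,
    ENNReal.ofReal_le_ofReal_iff (by positivity)] at h
  simpa [ENNReal.toReal_ofReal (by linarith : 0 ≤ p)] using h

theorem half_le_measureReal_lt_two_mul {α : Type*} [MeasurableSpace α] {μ : Measure α}
    [IsProbabilityMeasure μ] {f : α → ℝ} (hf : Measurable f) (hf₀ : 0 ≤ f)
    (hfi : Integrable f μ) {s : ℝ} (hs : 0 < s) (hfs : ∫ x, f x ∂μ ≤ s) :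
    1 / 2 ≤ μ.real {x | f x < 2 * s} := by
  have hmarkov := mul_meas_ge_le_integral_of_nonneg (.of_forall hf₀) hfi (2 * s)
  have hcompl : {x | f x < 2 * s} = {x | 2 * s ≤ f x}ᶜ := by ext; simp
  rw [hcompl, probReal_compl_eq_one_sub (measurableSet_le measurable_const hf)]
  nlinarith

theorem integral_norm_mul_le_of_bounds {E : Type*} [NormedAddCommGroup E] [MeasurableSpace E]
    [OpensMeasurableSpace E] {μ : Measure E} [IsProbabilityMeasure μ] {w : E → ℝ} (hw₀ : 0 ≤ w)
    (hwi : Integrable w μ) (hnwi : Integrable (fun x => ‖x‖ * w x) μ)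
    (hni : Integrable (‖·‖) μ) {s R a b : ℝ} (hs : 0 ≤ s) (hR : 0 ≤ R) (ha : 0 < a)
    (hb : 0 ≤ b) (hns : ∫ x, ‖x‖ ∂μ ≤ s) (hlow : ∀ x, ‖x‖ < 2 * s → a ≤ w x)
    (hhigh : ∀ x, R < ‖x‖ → w x ≤ b) :
    ∫ x, ‖x‖ * w x ∂μ ≤ (R + 2 * b / a * s) * ∫ x, w x ∂μ := by
  have hsplit : ∫ x, ‖x‖ * w x ∂μ ≤ R * ∫ x, w x ∂μ + b * s := by
    calc ∫ x, ‖x‖ * w x ∂μ ≤ ∫ x, (R * w x + b * ‖x‖) ∂μ := by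
          refine integral_mono hnwi ((hwi.const_mul R).add (hni.const_mul b)) fun x => ?_
          rcases le_or_gt ‖x‖ R with h | h
          · nlinarith [mul_le_mul_of_nonneg_right h (hw₀ x), mul_nonneg hb (norm_nonneg x)]
          · nlinarith [mul_le_mul_of_nonneg_left (hhigh x h) (norm_nonneg x),
              mul_nonneg hR (hw₀ x)]
      _ = R * ∫ x, w x ∂μ + b * ∫ x, ‖x‖ ∂μ := by
          rw [integral_add (hwi.const_mul R) (hni.const_mul b), integral_const_mul,
            integral_const_mul]
      _ ≤ R * ∫ x, w x ∂μ + b * s := by gcongr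
  have hmass : b * s ≤ 2 * b / a * s * ∫ x, w x ∂μ := by
    rcases hs.eq_or_lt with rfl | hs
    · simp
    have hball : MeasurableSet {x : E | ‖x‖ < 2 * s} :=
      measurableSet_lt measurable_norm measurable_const
    have hhalf := half_le_measureReal_lt_two_mul measurable_norm (fun x => norm_nonneg x) hni hs hns
    have hD : a * μ.real {x | ‖x‖ < 2 * s} ≤ ∫ x, w x ∂μ :=
      (setIntegral_ge_of_const_le_real hball (measure_ne_top _ _) hlow hwi.integrableOn).trans
        (setIntegral_le_integral hwi (.of_forall hw₀))
    calc b * s = 2 * b / a * s * (a / 2) := by field_simp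
      _ ≤ 2 * b / a * s * ∫ x, w x ∂μ := by gcongr; nlinarith
  linarith

theorem norm_le_pairNorm {d M : ℕ} (x : Vec d) (y : Opp M d) : ‖x‖ ≤ pairNorm x y :=
  Real.le_sqrt_of_sq_le (le_add_of_nonneg_right (sq_nonneg ‖y‖))

theorem pairNorm_le_norm_add_norm {d M : ℕ} (x : Vec d) (y : Opp M d) :
    pairNorm x y ≤ ‖x‖ + ‖y‖ :=
  Real.sqrt_le_iff.2 ⟨by positivity, by nlinarith [norm_nonneg x, norm_nonneg y]⟩

theorem norm_oppOf_sq {d M : ℕ} (m : Fin (M + 1)) (Z : Fin (M + 1) → Vec d) :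
    ‖oppOf m Z‖ ^ 2 = ∑ j, ‖Z (m.succAbove j)‖ ^ 2 := by
  simp only [EuclideanSpace.norm_sq_eq, Fintype.sum_prod_type]
  rfl

theorem norm_oppOf_le {d M : ℕ} (m : Fin (M + 1)) {Z : Fin (M + 1) → Vec d} {s : ℝ}
    (hZ : ∀ j, ‖Z j‖ ≤ s) : ‖oppOf m Z‖ ≤ √M * s := by
  have hs : 0 ≤ s := (norm_nonneg _).trans (hZ 0)
  refine le_of_sq_le_sq ?_ (by positivity)
  calc ‖oppOf m Z‖ ^ 2 = ∑ j, ‖Z (m.succAbove j)‖ ^ 2 := norm_oppOf_sq m Z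
    _ ≤ ∑ _j : Fin M, s ^ 2 := by gcongr with j; exact hZ _
    _ = (√M * s) ^ 2 := by simp [mul_pow]

theorem norm_consensus_le {d M : ℕ} (α : ℝ) (Em : Vec d → Opp M d → ℝ) (ρ : Measure (Vec d))
    (y : Opp M d) :
    ‖consensus α Em ρ y‖ ≤
      (∫ x, ‖x‖ * Real.exp (-α * Em x y) ∂ρ) / ∫ x, Real.exp (-α * Em x y) ∂ρ := by
  rw [consensus, norm_smul, norm_inv,
    Real.norm_of_nonneg (integral_nonneg fun x => (Real.exp_pos _).le), inv_mul_eq_div]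
  gcongr
  refine (norm_integral_le_integral_norm _).trans_eq (integral_congr_ae (.of_forall fun x => ?_))
  simp [norm_smul, mul_comm]

/-- Assumption (A2) for a single cost function `E_m`. -/
def HasPowerGrowth {d M : ℕ} (ℓ c G : ℝ) (Em : Vec d → Opp M d → ℝ) : Prop :=
  ∀ x y, (1 / c) * (pairNorm x y ^ ℓ - G) ≤ Em x y ∧ Em x y ≤ c * (pairNorm x y ^ ℓ + G)

/-- The first summand serves `S ≤ 1` or `ℓ = 0`; the second is `λ + 2` for `S > 1`, where
`λ ^ ℓ = c² κ ^ ℓ + c² G + G` with `κ = 2 + √M`. -/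
def gibbsMomentConst (M : ℕ) (α ℓ c G : ℝ) : ℝ :=
  2 * Real.exp (α * G / c) * Real.exp (α * c * ((2 + √M) ^ ℓ + G)) +
    ((c ^ 2 * (2 + √M) ^ ℓ + c ^ 2 * G + G) ^ (1 / ℓ) + 2)

namespace HasPowerGrowth

variable {d M : ℕ} {ℓ c G α r S : ℝ} {Em : Vec d → Opp M d → ℝ} {μ : Measure (Vec d)}
  {x : Vec d} {y : Opp M d}

theorem exp_le_gibbs (h : HasPowerGrowth ℓ c G Em) (hℓ : 0 ≤ ℓ) (hc : 0 ≤ c) (hα : 0 ≤ α)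
    (hr : pairNorm x y ≤ r) :
    Real.exp (-(α * c * (r ^ ℓ + G))) ≤ Real.exp (-α * Em x y) := by
  have hq : pairNorm x y ^ ℓ ≤ r ^ ℓ := Real.rpow_le_rpow (Real.sqrt_nonneg _) hr hℓ
  have hE : Em x y ≤ c * (r ^ ℓ + G) := (h x y).2.trans (by gcongr)
  rw [Real.exp_le_exp]
  nlinarith [mul_le_mul_of_nonneg_left hE hα]

theorem gibbs_le_exp (h : HasPowerGrowth ℓ c G Em) (hℓ : 0 ≤ ℓ) (hc : 0 ≤ c) (hα : 0 ≤ α)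
    (hr₀ : 0 ≤ r) (hr : r ≤ pairNorm x y) :
    Real.exp (-α * Em x y) ≤ Real.exp (-(α / c * (r ^ ℓ - G))) := by
  have hq : r ^ ℓ ≤ pairNorm x y ^ ℓ := Real.rpow_le_rpow hr₀ hr hℓ
  have hE : 1 / c * (r ^ ℓ - G) ≤ Em x y := le_trans (by gcongr) (h x y).1
  rw [Real.exp_le_exp, div_eq_mul_one_div α c, mul_assoc]
  nlinarith [mul_le_mul_of_nonneg_left hE hα]

theorem gibbs_le (h : HasPowerGrowth ℓ c G Em) (hc : 0 ≤ c) (hα : 0 ≤ α) (x : Vec d)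
    (y : Opp M d) : Real.exp (-α * Em x y) ≤ Real.exp (α * G / c) := by
  have hq : 0 ≤ pairNorm x y ^ ℓ := Real.rpow_nonneg (Real.sqrt_nonneg _) ℓ
  have hE : -(G / c) ≤ Em x y :=
    le_trans (by rw [one_div_mul_eq_div, ← neg_div]; gcongr; linarith) (h x y).1
  rw [Real.exp_le_exp, mul_div_assoc]
  nlinarith [mul_le_mul_of_nonneg_left hE hα]

theorem exp_le_gibbs_of_norm_lt (h : HasPowerGrowth ℓ c G Em) (hℓ : 0 ≤ ℓ) (hc : 0 ≤ c)
    (hα : 0 ≤ α) (hy : ‖y‖ ≤ √M * S) (hx : ‖x‖ < 2 * S) :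
    Real.exp (-(α * c * (((2 + √M) * S) ^ ℓ + G))) ≤ Real.exp (-α * Em x y) :=
  h.exp_le_gibbs hℓ hc hα (by linarith [pairNorm_le_norm_add_norm x y])

theorem integrable_gibbs (h : HasPowerGrowth ℓ c G Em) (hc : 0 ≤ c) (hα : 0 ≤ α)
    [IsFiniteMeasure μ] (hm : Measurable fun x => Em x y) :
    Integrable (fun x => Real.exp (-α * Em x y)) μ :=
  .of_bound (by fun_prop) (Real.exp (α * G / c)) <| .of_forall fun x => by
    rw [Real.norm_of_nonneg (Real.exp_pos _).le]; exact h.gibbs_le hc hα x y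

theorem integrable_norm_mul_gibbs (h : HasPowerGrowth ℓ c G Em) (hc : 0 ≤ c) (hα : 0 ≤ α)
    (hm : Measurable fun x => Em x y) (hni : Integrable (‖·‖) μ) :
    Integrable (fun x => ‖x‖ * Real.exp (-α * Em x y)) μ :=
  hni.mul_bdd (by fun_prop) <| .of_forall fun x => by
    rw [Real.norm_of_nonneg (Real.exp_pos _).le]; exact h.gibbs_le hc hα x y

theorem integral_norm_mul_gibbs_le_of_rpow_le (h : HasPowerGrowth ℓ c G Em) (hℓ : 0 ≤ ℓ)
    (hc : 0 ≤ c) (hα : 0 ≤ α) [IsProbabilityMeasure μ] (hm : Measurable fun x => Em x y)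
    (hni : Integrable (‖·‖) μ) (hS : 0 ≤ S) (hnS : ∫ x, ‖x‖ ∂μ ≤ S) (hy : ‖y‖ ≤ √M * S)
    (hSℓ : ((2 + √M) * S) ^ ℓ ≤ (2 + √M) ^ ℓ) :
    ∫ x, ‖x‖ * Real.exp (-α * Em x y) ∂μ ≤
      2 * Real.exp (α * G / c) * Real.exp (α * c * ((2 + √M) ^ ℓ + G)) * S *
        ∫ x, Real.exp (-α * Em x y) ∂μ := by
  have := integral_norm_mul_le_of_bounds (a := Real.exp (-(α * c * ((2 + √M) ^ ℓ + G))))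
    (fun x => (Real.exp_pos _).le) (h.integrable_gibbs hc hα hm)
    (h.integrable_norm_mul_gibbs hc hα hm hni) hni hS le_rfl (Real.exp_pos _)
    (Real.exp_pos _).le hnS
    (fun x hx => (Real.exp_le_exp.2 (by gcongr)).trans (h.exp_le_gibbs_of_norm_lt hℓ hc hα hy hx))
    (fun x _ => h.gibbs_le hc hα x y)
  convert this using 2
  rw [Real.exp_neg]
  field_simp
  ring

theorem integral_norm_mul_gibbs_le_of_one_lt (h : HasPowerGrowth ℓ c G Em) (hℓ : 0 < ℓ)
    (hc : 0 < c) (hG : 0 ≤ G) (hα : 0 ≤ α) [IsProbabilityMeasure μ]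
    (hm : Measurable fun x => Em x y) (hni : Integrable (‖·‖) μ) (hS : 1 < S)
    (hnS : ∫ x, ‖x‖ ∂μ ≤ S) (hy : ‖y‖ ≤ √M * S) :
    ∫ x, ‖x‖ * Real.exp (-α * Em x y) ∂μ ≤
      ((c ^ 2 * (2 + √M) ^ ℓ + c ^ 2 * G + G) ^ (1 / ℓ) + 2) * S *
        ∫ x, Real.exp (-α * Em x y) ∂μ := by
  set κ := 2 + √M
  set lam := (c ^ 2 * κ ^ ℓ + c ^ 2 * G + G) ^ (1 / ℓ)
  have hlam : 0 ≤ lam := by positivity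
  have hSℓ : 1 ≤ S ^ ℓ := Real.one_le_rpow hS.le hℓ.le
  have hradius : c * ((κ * S) ^ ℓ + G) ≤ ((lam * S) ^ ℓ - G) / c := by
    rw [Real.mul_rpow (by positivity) (by positivity), Real.mul_rpow hlam (by positivity),
      ← Real.rpow_mul (by positivity), one_div_mul_cancel hℓ.ne', Real.rpow_one,
      le_div_iff₀ hc]
    nlinarith [mul_nonneg (mul_nonneg (sq_nonneg c) hG) (sub_nonneg.2 hSℓ),
      mul_nonneg hG (sub_nonneg.2 hSℓ)]
  have hfar : ∀ x, lam * S < ‖x‖ →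
      Real.exp (-α * Em x y) ≤ Real.exp (-(α * c * ((κ * S) ^ ℓ + G))) := fun x hx =>
    (h.gibbs_le_exp hℓ.le hc.le hα (by positivity) (hx.le.trans (norm_le_pairNorm x y))).trans
      (Real.exp_le_exp.2 (by
        rw [neg_le_neg_iff, mul_assoc, div_mul_eq_mul_div, mul_div_assoc]
        exact mul_le_mul_of_nonneg_left hradius hα))
  have := integral_norm_mul_le_of_bounds (fun x => (Real.exp_pos _).le)
    (h.integrable_gibbs hc.le hα hm) (h.integrable_norm_mul_gibbs hc.le hα hm hni) hni
    (by positivity) (by positivity) (Real.exp_pos _) (Real.exp_pos _).le hnS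
    (fun x hx => h.exp_le_gibbs_of_norm_lt hℓ.le hc.le hα hy hx) hfar
  convert this using 2
  field_simp
  ring

theorem integral_norm_mul_gibbs_le (h : HasPowerGrowth ℓ c G Em) (hℓ : 0 ≤ ℓ) (hc : 0 < c)
    (hG : 0 ≤ G) (hα : 0 ≤ α) [IsProbabilityMeasure μ] (hm : Measurable fun x => Em x y)
    (hni : Integrable (‖·‖) μ) (hS : 0 ≤ S) (hnS : ∫ x, ‖x‖ ∂μ ≤ S) (hy : ‖y‖ ≤ √M * S) :
    ∫ x, ‖x‖ * Real.exp (-α * Em x y) ∂μ ≤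
      gibbsMomentConst M α ℓ c G * S * ∫ x, Real.exp (-α * Em x y) ∂μ := by
  have hD : 0 ≤ ∫ x, Real.exp (-α * Em x y) ∂μ := integral_nonneg fun x => (Real.exp_pos _).le
  by_cases hlarge : 0 < ℓ ∧ 1 < S
  · refine (h.integral_norm_mul_gibbs_le_of_one_lt hlarge.1 hc hG hα hm hni hlarge.2 hnS
      hy).trans ?_
    gcongr
    exact le_add_of_nonneg_left (by positivity)
  · have hSℓ : ((2 + √M) * S) ^ ℓ ≤ (2 + √M) ^ ℓ := by
      rcases hℓ.eq_or_lt with rfl | hℓ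
      · simp
      · exact Real.rpow_le_rpow (by positivity)
          (mul_le_of_le_one_right (by positivity) (not_lt.1 fun h1 => hlarge ⟨hℓ, h1⟩)) hℓ.le
    refine (h.integral_norm_mul_gibbs_le_of_rpow_le hℓ hc.le hα hm hni hS hnS hy hSℓ).trans ?_
    gcongr
    exact le_add_of_nonneg_right (by positivity)

end HasPowerGrowth

theorem stmt6_general {d M : ℕ}
    (p : ℝ) (hp : 1 ≤ p) (α : ℝ) (hα : 0 < α)
    (E : Fin (M + 1) → Vec d → Opp M d → ℝ)
    (hE : ∀ m, Measurable (Function.uncurry (E m)))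
    -- Assumption (A2)
    (ℓ c G : ℝ) (hℓ : 0 ≤ ℓ) (hc : 0 < c) (hG : 0 < G)
    (hA2 : ∀ (m : Fin (M + 1)) (x : Vec d) (y : Opp M d),
      (1 / c) * (pairNorm x y ^ ℓ - G) ≤ E m x y ∧ E m x y ≤ c * (pairNorm x y ^ ℓ + G)) :
    ∃ C > (0 : ℝ), ∀ (ρ : Fin (M + 1) → Measure (Vec d)),
      (∀ j, IsProbabilityMeasure (ρ j)) →
      (∀ j, ∫⁻ x, (‖x‖₊ : ℝ≥0∞) ^ p ∂(ρ j) < ⊤) →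
      ∀ m : Fin (M + 1),
        ‖consensus α (E m) (ρ m) (oppOf m fun j => meanOf (ρ j))‖ ≤
          (∫ x, ‖x‖ * Real.exp (-α * E m x (oppOf m fun j => meanOf (ρ j))) ∂(ρ m)) /
            (∫ x, Real.exp (-α * E m x (oppOf m fun j => meanOf (ρ j))) ∂(ρ m)) ∧
        (∫ x, ‖x‖ * Real.exp (-α * E m x (oppOf m fun j => meanOf (ρ j))) ∂(ρ m)) /
            (∫ x, Real.exp (-α * E m x (oppOf m fun j => meanOf (ρ j))) ∂(ρ m))
          ≤ C * (∑ j, ∫ x, ‖x‖ ^ p ∂(ρ j)) ^ (1 / p) := by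
  refine ⟨gibbsMomentConst M α ℓ c G, by unfold gibbsMomentConst; positivity,
    fun ρ hρ hmom m => ⟨norm_consensus_le .., ?_⟩⟩
  set S := (∑ j, ∫ x, ‖x‖ ^ p ∂(ρ j)) ^ (1 / p)
  have hp₁ : 1 ≤ ENNReal.ofReal p := by simpa using ENNReal.ofReal_le_ofReal hp
  have hLp j : MemLp id (ENNReal.ofReal p) (ρ j) :=
    memLp_ofReal_of_lintegral_lt_top (by linarith) aestronglyMeasurable_id (hmom j)
  have hni j : Integrable (‖·‖) (ρ j) :=
    (memLp_one_iff_integrable.1 ((hLp j).mono_exponent hp₁)).norm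
  have hnS j : ∫ x, ‖x‖ ∂(ρ j) ≤ S :=
    (integral_norm_le_integral_norm_rpow hp (hLp j)).trans <|
      Real.rpow_le_rpow (integral_nonneg fun x => by positivity)
        (single_le_sum (f := fun j => ∫ x, ‖x‖ ^ p ∂(ρ j))
          (fun i _ => integral_nonneg fun x => by positivity) (mem_univ j))
        (by positivity)
  have hm : Measurable fun x => E m x (oppOf m fun j => meanOf (ρ j)) :=
    (hE m).comp measurable_prodMk_right
  have hpg : HasPowerGrowth ℓ c G (E m) := hA2 m
  rw [div_le_iff₀ (integral_exp_pos (hpg.integrable_gibbs hc.le hα.le hm))]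
  exact hpg.integral_norm_mul_gibbs_le hℓ hc hG.le hα.le hm (hni m) (by positivity) (hnS m)
    (norm_oppOf_le m fun j => (norm_integral_le_integral_norm _).trans (hnS j))

/-- bound on the consensus point via weighted moments. -/
theorem stmt6 {d M : ℕ} (hd : 0 < d)
    (p : ℝ) (hp : 1 ≤ p) (α : ℝ) (hα : 0 < α)
    (E : Fin (M + 1) → Vec d → Opp M d → ℝ)
    (hE : ∀ m, Measurable (Function.uncurry (E m)))
    -- Assumption (A2)
    (ℓ c G : ℝ) (hℓ : 0 ≤ ℓ) (hc : 0 < c) (hG : 0 < G)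
    (hA2 : ∀ (m : Fin (M + 1)) (x : Vec d) (y : Opp M d),
      (1 / c) * (pairNorm x y ^ ℓ - G) ≤ E m x y ∧ E m x y ≤ c * (pairNorm x y ^ ℓ + G)) :
    ∃ C > (0 : ℝ), ∀ (ρ : Fin (M + 1) → Measure (Vec d)),
      (∀ j, IsProbabilityMeasure (ρ j)) →
      (∀ j, ∫⁻ x, (‖x‖₊ : ℝ≥0∞) ^ p ∂(ρ j) < ⊤) →
      ∀ m : Fin (M + 1),
        ‖consensus α (E m) (ρ m) (oppOf m fun j => meanOf (ρ j))‖ ≤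
          (∫ x, ‖x‖ * Real.exp (-α * E m x (oppOf m fun j => meanOf (ρ j))) ∂(ρ m)) /
            (∫ x, Real.exp (-α * E m x (oppOf m fun j => meanOf (ρ j))) ∂(ρ m)) ∧
        (∫ x, ‖x‖ * Real.exp (-α * E m x (oppOf m fun j => meanOf (ρ j))) ∂(ρ m)) /
            (∫ x, Real.exp (-α * E m x (oppOf m fun j => meanOf (ρ j))) ∂(ρ m))
          ≤ C * (∑ j, ∫ x, ‖x‖ ^ p ∂(ρ j)) ^ (1 / p) :=
  stmt6_general p hp α hα E hE ℓ c G hℓ hc hG hA2
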